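/- Combining the two inequalities J*_∞(x) ≤ J^M_∞(x) − M + J*_∞(x̃_{T_M}) and J^M_∞(x) ≤ J*_∞(x) − J*_∞(x*_{T_M}) + max(φ(x*_{T_M}), M), and assuming the terminal states x̃_{T_M}, x*_{T_M} tend to 0 as M → 0 with J*_∞ and φ continuous at 0 and vanishing there, we obtain lim_{M→0} J^M_∞(x) = J*_∞(x). -/

import Mathlib

open Filter Topology

theorem tendsto_of_eventually_add_le_of_le_add {α β : Type*} [AddCommMonoid β] [Preorder β]
    [TopologicalSpace β] [OrderTopology β] [ContinuousAdd β]
    {l : Filter α} {y e₁ e₂ : α → β} {c : β}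
    (he₁ : Tendsto e₁ l (𝓝 0)) (he₂ : Tendsto e₂ l (𝓝 0))
    (hlow : ∀ᶠ a in l, c + e₁ a ≤ y a) (hupp : ∀ᶠ a in l, y a ≤ c + e₂ a) :
    Tendsto y l (𝓝 c) := by
  have hshift : ∀ {e : α → β}, Tendsto e l (𝓝 0) → Tendsto (fun a => c + e a) l (𝓝 c) :=
    fun he => by simpa using tendsto_const_nhds.add he
  exact tendsto_of_tendsto_of_tendsto_of_le_of_le' (hshift he₁) (hshift he₂) hlow hupp

theorem Filter.Tendsto.comp_of_continuousAt_of_map_zero {α X Y : Type*} [TopologicalSpace X]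
    [Zero X] [TopologicalSpace Y] [Zero Y] {l : Filter α} {g : X → Y} {u : α → X}
    (hg : ContinuousAt g 0) (hg0 : g 0 = 0) (hu : Tendsto u l (𝓝 0)) :
    Tendsto (fun a => g (u a)) l (𝓝 0) :=
  hg0 ▸ hg.tendsto.comp hu

theorem stmt_8_general {X : Type*} [NormedAddCommGroup X]
    (Jstar : X → ℝ) (φ : X → ℝ) (x : X)
    (JM : ℝ → ℝ) (xt xsT : ℝ → X)
    -- the two inequalities
    (h1 : ∀ M : ℝ, 0 < M → Jstar x ≤ JM M - M + Jstar (xt M))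
    (h2 : ∀ M : ℝ, 0 < M → JM M ≤ Jstar x - Jstar (xsT M) + max (φ (xsT M)) M)
    -- terminal/hitting states lie in Ω_M
    (hmem : ∀ M : ℝ, 0 < M → φ (xt M) ≤ M ∧ φ (xsT M) ≤ M)
    -- terminal/hitting states converge to 0 as M → 0
    (hxt : Filter.Tendsto xt (nhdsWithin (0 : ℝ) (Set.Ioi 0)) (nhds 0))
    (hxsT : Filter.Tendsto xsT (nhdsWithin (0 : ℝ) (Set.Ioi 0)) (nhds 0))
    (hJcont : ContinuousAt Jstar 0) (hJ0 : Jstar 0 = 0) :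
    Filter.Tendsto JM (nhdsWithin (0 : ℝ) (Set.Ioi 0)) (nhds (Jstar x)) := by
  have hM : Tendsto (fun M : ℝ => M) (𝓝[>] 0) (𝓝 0) := tendsto_nhdsWithin_of_tendsto_nhds tendsto_id
  have hJt := hxt.comp_of_continuousAt_of_map_zero hJcont hJ0
  have hJs := hxsT.comp_of_continuousAt_of_map_zero hJcont hJ0
  refine tendsto_of_eventually_add_le_of_le_add (by simpa using hM.sub hJt) (by simpa using hM.sub hJs)
    ?_ ?_ <;> filter_upwards [self_mem_nhdsWithin] with M hM
  · linarith [h1 M hM]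
  · -- `x*_{T_M} ∈ Ω_M`, so the `max` in the second inequality is just `M`.
    have := h2 M hM
    rw [max_eq_right (hmem M hM).2] at this
    linarith

/-- combining the two inequalities yields convergence of the
AC-OCP cost to the infinite-horizon optimal cost as M → 0. -/
theorem stmt_8 {X : Type*} [NormedAddCommGroup X]
    (Jstar : X → ℝ) (φ : X → ℝ) (x : X)
    (JM : ℝ → ℝ) (xt xsT : ℝ → X)
    -- the two inequalities
    (h1 : ∀ M : ℝ, 0 < M → Jstar x ≤ JM M - M + Jstar (xt M))
    (h2 : ∀ M : ℝ, 0 < M → JM M ≤ Jstar x - Jstar (xsT M) + max (φ (xsT M)) M)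
    -- terminal/hitting states lie in Ω_M
    (hmem : ∀ M : ℝ, 0 < M → φ (xt M) ≤ M ∧ φ (xsT M) ≤ M)
    -- terminal/hitting states converge to 0 as M → 0
    (hxt : Filter.Tendsto xt (nhdsWithin (0 : ℝ) (Set.Ioi 0)) (nhds 0))
    (hxsT : Filter.Tendsto xsT (nhdsWithin (0 : ℝ) (Set.Ioi 0)) (nhds 0))
    (hJcont : ContinuousAt Jstar 0) (hJ0 : Jstar 0 = 0)
    (hφcont : ContinuousAt φ 0) (hφ0 : φ 0 = 0) :
    Filter.Tendsto JM (nhdsWithin (0 : ℝ) (Set.Ioi 0)) (nhds (Jstar x)) :=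
  stmt_8_general Jstar φ x JM xt xsT h1 h2 hmem hxt hxsT hJcont hJ0
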